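/- arXiv:1702.00588 — 2 statements merged into one kernel-verified Lean document; each statement's English description precedes it below -/
import Mathlib

section
/- The Clebsch graph is triangle-free. That is, in the graph whose vertex set is the finite field GF(16) and in which two distinct elements are adjacent if and only if their difference is a nonzero perfect cube in GF(16), there do not exist three pairwise adjacent vertices. -/
/-!
Since `GF(16)ˣ` has order 15, every nonzero cube is a fifth root of unity.
A triangle `a, b, c` would give fifth roots of unity `x = a - b`, `y = b - c` with `x + y = a - c`
again a fifth root of unity; dividing by `x`, both `t = y / x` and `t + 1` would be fifth roots of
unity, which is impossible in characteristic 2.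
-/

theorem GaloisField.pow_card_sub_one_eq_one {p : ℕ} [Fact p.Prime] {n : ℕ} (hn : n ≠ 0)
    {z : GaloisField p n} (hz : z ≠ 0) : z ^ (p ^ n - 1) = 1 := by
  have := Fintype.ofFinite (GaloisField p n)
  rw [← GaloisField.card p n hn, Nat.card_eq_fintype_card]
  exact FiniteField.pow_card_sub_one_eq_one z hz

theorem CharTwo.add_one_pow_five_ne_one {F : Type*} [Field F] [CharP F 2] {t : F}
    (ht : t ^ 5 = 1) : (t + 1) ^ 5 ≠ 1 := by
  intro h
  -- in characteristic 2, `(t + 1) ^ 5 = t ^ 5 + t ^ 4 + t + 1`, so `t ^ 4 + t = 1`;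
  -- multiplying by `t` gives `t ^ 2 + t + 1 = 0`
  have ht3 : t ^ 3 = 1 := by grind
  have ht1 : t = 1 := by simpa using pow_gcd_eq_one.mpr ⟨ht3, ht⟩
  simp [ht1] at h

theorem CharTwo.add_pow_five_ne_one {F : Type*} [Field F] [CharP F 2] {x y : F}
    (hx : x ^ 5 = 1) (hy : y ^ 5 = 1) : (x + y) ^ 5 ≠ 1 := by
  have hx0 : x ≠ 0 := by rintro rfl; simp at hx
  have hxy : (x + y) ^ 5 = (y / x + 1) ^ 5 := by
    rw [div_add_one hx0, div_pow, hx, div_one, add_comm]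
  rw [hxy]
  exact CharTwo.add_one_pow_five_ne_one (by rw [div_pow, hx, hy, div_one])

/-- The Clebsch graph (vertices `GF(16)`, adjacency: difference is a nonzero cube)
is triangle-free. -/
theorem clebsch_triangle_free :
    ∀ a b c : GaloisField 2 4,
      (a ≠ b ∧ ∃ z : GaloisField 2 4, z ≠ 0 ∧ a - b = z ^ 3) →
      (b ≠ c ∧ ∃ z : GaloisField 2 4, z ≠ 0 ∧ b - c = z ^ 3) →
      (a ≠ c ∧ ∃ z : GaloisField 2 4, z ≠ 0 ∧ a - c = z ^ 3) →
      False := by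
  rintro a b c ⟨-, u, hu, hab⟩ ⟨-, v, hv, hbc⟩ ⟨-, w, hw, hac⟩
  have cube_pow_five {z : GaloisField 2 4} (hz : z ≠ 0) : (z ^ 3) ^ 5 = 1 := by
    rw [← pow_mul]
    exact GaloisField.pow_card_sub_one_eq_one (by norm_num) hz
  have hsum : u ^ 3 + v ^ 3 = w ^ 3 := by rw [← hab, ← hbc, ← hac]; ring
  exact CharTwo.add_pow_five_ne_one (cube_pow_five hu) (cube_pow_five hv)
    (hsum ▸ cube_pow_five hw)
end

section
/- Let G be a finite connected planar triangle-free simple graph with n ≥ 3 vertices admitting a proper 3-coloring. Then, in the notation of the previous two statements, max(c₁₂, c₂₃, c₁₃) ≥ (s⁺ + 8)/6, and consequently G has at least 2^{(s⁺+8)/6} distinct proper 3-colorings, where s⁺ = Σ_{i≥5} (i-4)sᵢ is computed from any plane embedding of G. -/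
/-
Swapping the colours `a` and `b` on any subset of the components of the subgraph induced by the
colour classes `a`, `b` (the Kempe chains) keeps the colouring proper, which gives `2 ^ c_ab`
distinct proper 3-colourings. Every finite graph satisfies `|V| ≤ c + e`. Applied to the three
bichromatic subgraphs, whose vertex sets cover each vertex twice and whose edge sets are disjoint,
this yields `c₀₁ + c₁₂ + c₀₂ ≥ 2n - e`. Euler's formula together with the double count of face
boundaries gives `s⁺ = 4n - 2e - 8`, so `2n - e = (s⁺ + 8) / 2`, and the largest `c_ab` is at
least the average of the three.
-/

open Finset SimpleGraph

theorem sum_card_ne_add_card {V α : Type*} [Fintype V] [Fintype α] (φ : V → α) :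
    ∑ c, Nat.card {v | φ v ≠ c} + Fintype.card V = Fintype.card α * Fintype.card V := by
  classical
  have h (c : α) : Nat.card {v | φ v ≠ c} + #{v | φ v = c} = Fintype.card V := by
    rw [Nat.card_eq_fintype_card, Fintype.card_subtype, add_comm]
    exact card_filter_add_card_filter_not _
  have hfib : ∑ c, #{v | φ v = c} = Fintype.card V :=
    (card_eq_sum_card_fiberwise fun v _ => mem_univ (φ v)).symm
  calc ∑ c, Nat.card {v | φ v ≠ c} + Fintype.card V
      = ∑ c, (Nat.card {v | φ v ≠ c} + #{v | φ v = c}) := by rw [sum_add_distrib, hfib]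
    _ = Fintype.card α * Fintype.card V := by simp only [h, sum_const, card_univ, smul_eq_mul]

namespace SimpleGraph

variable {V : Type*} {G : SimpleGraph V}

theorem Reachable.exists_adj_dist_lt {v w : V} (h : G.Reachable v w) (hne : v ≠ w) :
    ∃ u, G.Adj v u ∧ G.dist u w < G.dist v w := by
  obtain ⟨p, hp⟩ := h.exists_walk_length_eq_dist
  cases p with
  | nil => exact absurd rfl hne
  | cons hadj q =>
    refine ⟨_, hadj, ?_⟩
    have := G.dist_le q
    rw [Walk.length_cons] at hp
    omega

variable (G) in
theorem card_le_card_connectedComponent_add_card_edgeSet [Finite V] :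
    Nat.card V ≤ Nat.card G.ConnectedComponent + Nat.card G.edgeSet := by
  classical
  let root (v : V) : V := (G.connectedComponentMk v).out
  have root_eq_of_adj {u v : V} (h : G.Adj u v) : root u = root v := by
    simp only [root, ConnectedComponent.eq.mpr h.reachable]
  have reachable_root (v : V) : G.Reachable v (root v) :=
    (ConnectedComponent.eq.mp (G.connectedComponentMk v).out_eq).symm
  let rank (v : V) : ℕ := G.dist v (root v)
  have hparent (v : V) : ∃ u, v ≠ root v → G.Adj v u ∧ rank u < rank v := by
    by_cases hv : v = root v
    · exact ⟨v, fun h => (h hv).elim⟩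
    · obtain ⟨u, hadj, hlt⟩ := (reachable_root v).exists_adj_dist_lt hv
      exact ⟨u, fun _ => ⟨hadj, by simpa only [rank, root_eq_of_adj hadj] using hlt⟩⟩
  choose parent hparent using hparent
  -- a non-root vertex goes to the first edge of a shortest path to its root; an edge shared by
  -- two vertices would make each of them strictly closer to the root than the other
  let f (v : V) : G.ConnectedComponent ⊕ G.edgeSet :=
    if hv : v = root v then .inl (G.connectedComponentMk v)
    else .inr ⟨s(v, parent v), (hparent v hv).1⟩
  have hf : f.Injective := by
    intro v w hvw
    by_cases hv : v = root v <;> by_cases hw : w = root w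
    · simp only [f, dif_pos hv, dif_pos hw, Sum.inl.injEq] at hvw
      exact hv.trans ((congrArg Quot.out hvw).trans hw.symm)
    · simp [f, dif_pos hv, dif_neg hw] at hvw
    · simp [f, dif_neg hv, dif_pos hw] at hvw
    · simp only [f, dif_neg hv, dif_neg hw, Sum.inr.injEq] at hvw
      rcases Sym2.eq_iff.mp (congrArg Subtype.val hvw) with ⟨hvw, -⟩ | ⟨hv', hw'⟩
      · exact hvw
      · have h₁ : rank w < rank v := hw' ▸ (hparent v hv).2
        have h₂ : rank v < rank w := hv' ▸ (hparent w hw).2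
        exact absurd (h₁.trans h₂) (lt_irrefl _)
  calc Nat.card V ≤ Nat.card (G.ConnectedComponent ⊕ G.edgeSet) :=
        Nat.card_le_card_of_injective f hf
    _ = _ := Nat.card_sum

theorem sum_card_edgeSet_induce_le [Finite V] {ι : Type*} (I : Finset ι) (S : ι → Set V)
    (hS : ∀ i ∈ I, ∀ j ∈ I, i ≠ j → G.IsIndepSet (S i ∩ S j)) :
    ∑ i ∈ I, Nat.card (G.induce (S i)).edgeSet ≤ Nat.card G.edgeSet := by
  classical
  have := Fintype.ofFinite V
  let T (i : ι) : Finset (Sym2 V) := G.edgeFinset ∩ (S i).toFinset.sym2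
  have hcard (i : ι) : Nat.card (G.induce (S i)).edgeSet = #(T i) := by
    rw [show T i = _ from map_edgeFinset_induce.symm, card_map, edgeFinset_card,
      Nat.card_eq_fintype_card]
  have hdisj : (I : Set ι).PairwiseDisjoint T := by
    intro i hi j hj hij
    refine Finset.disjoint_left.mpr fun e hei hej => ?_
    induction e using Sym2.ind with
    | h u v =>
      simp only [T, mem_inter, mem_edgeFinset, mem_edgeSet, mk_mem_sym2_iff,
        Set.mem_toFinset] at hei hej
      exact hS i hi j hj hij ⟨hei.2.1, hej.2.1⟩ ⟨hei.2.2, hej.2.2⟩ hei.1.ne hei.1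
  calc ∑ i ∈ I, Nat.card (G.induce (S i)).edgeSet = #(I.biUnion T) := by
        rw [card_biUnion hdisj]
        exact sum_congr rfl fun i _ => hcard i
    _ ≤ #G.edgeFinset := card_le_card (biUnion_subset.mpr fun i _ => inter_subset_left)
    _ = Nat.card G.edgeSet := by rw [edgeFinset_card, Nat.card_eq_fintype_card]

section KempeChain

variable {α : Type*} {φ : V → α} {a b : α}

abbrev kempeGraph (G : SimpleGraph V) (φ : V → α) (a b : α) :
    SimpleGraph {v | φ v = a ∨ φ v = b} :=
  G.induce {v | φ v = a ∨ φ v = b}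

variable [DecidableEq α]

def kempeSwitch (φ : V → α) (a b : α) (σ : (G.kempeGraph φ a b).ConnectedComponent → Bool)
    (v : V) : α :=
  if h : φ v = a ∨ φ v = b then
    bif σ ((G.kempeGraph φ a b).connectedComponentMk ⟨v, h⟩) then Equiv.swap a b (φ v)
    else φ v
  else φ v

theorem kempeSwitch_eq_or_eq (σ : (G.kempeGraph φ a b).ConnectedComponent → Bool) {v : V}
    (h : φ v = a ∨ φ v = b) : kempeSwitch φ a b σ v = a ∨ kempeSwitch φ a b σ v = b := by
  rw [kempeSwitch, dif_pos h]
  cases σ _ <;> rcases h with h | h <;> simp [h]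

theorem kempeSwitch_of_not (σ : (G.kempeGraph φ a b).ConnectedComponent → Bool) {v : V}
    (h : ¬(φ v = a ∨ φ v = b)) : kempeSwitch φ a b σ v = φ v :=
  dif_neg h

theorem kempeSwitch_ne_of_adj (hφ : ∀ u v, G.Adj u v → φ u ≠ φ v)
    (σ : (G.kempeGraph φ a b).ConnectedComponent → Bool) {u v : V} (huv : G.Adj u v) :
    kempeSwitch φ a b σ u ≠ kempeSwitch φ a b σ v := by
  by_cases hu : φ u = a ∨ φ u = b <;> by_cases hv : φ v = a ∨ φ v = b
  · have hK : (G.kempeGraph φ a b).connectedComponentMk ⟨u, hu⟩ =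
        (G.kempeGraph φ a b).connectedComponentMk ⟨v, hv⟩ :=
      ConnectedComponent.eq.mpr (Adj.reachable (by simpa using huv))
    simp only [kempeSwitch, dif_pos hu, dif_pos hv, hK]
    cases σ _
    · exact hφ u v huv
    · exact (Equiv.injective _).ne (hφ u v huv)
  · rw [kempeSwitch_of_not σ hv]
    rintro h
    exact hv (h ▸ kempeSwitch_eq_or_eq σ hu)
  · rw [kempeSwitch_of_not σ hu]
    rintro h
    exact hu (h ▸ kempeSwitch_eq_or_eq σ hv)
  · rw [kempeSwitch_of_not σ hu, kempeSwitch_of_not σ hv]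
    exact hφ u v huv

theorem kempeSwitch_injective (hab : a ≠ b) : (kempeSwitch (G := G) φ a b).Injective := by
  intro σ τ h
  funext K
  induction K using ConnectedComponent.ind with | h v => ?_
  obtain ⟨v, hv : φ v = a ∨ φ v = b⟩ := v
  have hswap : Equiv.swap a b (φ v) ≠ φ v := by
    rcases hv with hv | hv <;> simp [hv, hab, hab.symm]
  have := congrFun h v
  unfold kempeSwitch at this
  rw [dif_pos hv, dif_pos hv] at this
  cases hσ : σ _ <;> cases hτ : τ _ <;> simp only [hσ, hτ, cond_true, cond_false] at this
  · rfl
  · exact absurd this.symm hswap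
  · exact absurd this hswap
  · rfl

theorem two_pow_card_connectedComponent_kempeGraph_le_card [Finite V] [Finite α]
    (hφ : ∀ u v, G.Adj u v → φ u ≠ φ v) (hab : a ≠ b) :
    2 ^ Nat.card (G.kempeGraph φ a b).ConnectedComponent ≤
      Nat.card {f : V → α // ∀ u v, G.Adj u v → f u ≠ f v} :=
  calc 2 ^ Nat.card (G.kempeGraph φ a b).ConnectedComponent
      = Nat.card ((G.kempeGraph φ a b).ConnectedComponent → Bool) := by
        rw [Nat.card_fun, Nat.card_eq_fintype_card (α := Bool), Fintype.card_bool]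
    _ ≤ _ := Nat.card_le_card_of_injective
        (fun σ => ⟨kempeSwitch φ a b σ, fun _ _ => kempeSwitch_ne_of_adj hφ σ⟩)
        fun _ _ h => kempeSwitch_injective hab (congrArg Subtype.val h)

end KempeChain

theorem two_mul_card_le_sum_card_connectedComponent_add_card_edgeSet [Fintype V]
    {φ : V → Fin 3} (hφ : ∀ u v, G.Adj u v → φ u ≠ φ v) :
    2 * Fintype.card V ≤
      ∑ c, Nat.card (G.induce {v | φ v ≠ c}).ConnectedComponent + Nat.card G.edgeSet := by
  have hV := sum_card_ne_add_card φ
  -- two of the sets `{φ ≠ c}` meet in a single colour class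
  have hindep : ∀ c ∈ univ, ∀ d ∈ univ, c ≠ d →
      G.IsIndepSet ({v | φ v ≠ c} ∩ {v | φ v ≠ d}) := by
    intro c _ d _ hcd u hu v hv _ hadj
    have := hφ u v hadj
    simp only [Set.mem_inter_iff, Set.mem_ofPred_eq] at hu hv
    omega
  have hE := G.sum_card_edgeSet_induce_le univ _ hindep
  have hC := sum_le_sum fun c (_ : c ∈ univ) =>
    (G.induce {v | φ v ≠ c}).card_le_card_connectedComponent_add_card_edgeSet
  rw [sum_add_distrib] at hC
  rw [Fintype.card_fin] at hV
  omega

end SimpleGraph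

theorem sum_sub_four_mul_eq_of_euler {m e n : ℕ} {s : ℕ → ℕ}
    (heuler : e + 2 = n + ∑ i ∈ range m, s i) (hdouble : 2 * e = ∑ i ∈ range m, i * s i) :
    ∑ i ∈ range m, ((i : ℝ) - 4) * s i = 4 * n - 2 * e - 8 := by
  have heuler' : (e : ℝ) + 2 = n + ∑ i ∈ range m, (s i : ℝ) := by exact_mod_cast heuler
  have hdouble' : 2 * (e : ℝ) = ∑ i ∈ range m, (i : ℝ) * s i := by exact_mod_cast hdouble
  simp only [sub_mul, sum_sub_distrib, ← mul_sum]
  linarith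

theorem many_colorings_of_plane_triangle_free_general {V : Type*} [Fintype V]
    (G : SimpleGraph V)
    (m : ℕ) (s : ℕ → ℕ)
    (heuler : Nat.card G.edgeSet + 2 = Fintype.card V + ∑ i ∈ Finset.range m, s i)
    (hdouble : 2 * Nat.card G.edgeSet = ∑ i ∈ Finset.range m, i * s i)
    (φ : V → Fin 3) (hφ : ∀ u v : V, G.Adj u v → φ u ≠ φ v) :
    (((∑ i ∈ Finset.range m, ((i : ℝ) - 4) * (s i : ℝ)) + 8) / 6 ≤
        (max (max
          (Nat.card ((G.induce {v : V | φ v = 0 ∨ φ v = 1}).ConnectedComponent))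
          (Nat.card ((G.induce {v : V | φ v = 1 ∨ φ v = 2}).ConnectedComponent)))
          (Nat.card ((G.induce {v : V | φ v = 0 ∨ φ v = 2}).ConnectedComponent)) : ℝ)) ∧
    (2 : ℝ) ^ (((∑ i ∈ Finset.range m, ((i : ℝ) - 4) * (s i : ℝ)) + 8) / 6) ≤
      (Nat.card {f : V → Fin 3 // ∀ u v : V, G.Adj u v → f u ≠ f v} : ℝ) := by
  have hcount := two_mul_card_le_sum_card_connectedComponent_add_card_edgeSet hφ
  have hpair (c a b : Fin 3) (h : ∀ x : Fin 3, x ≠ c ↔ x = a ∨ x = b) :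
      {v | φ v ≠ c} = {v | φ v = a ∨ φ v = b} := Set.ext fun v => h (φ v)
  rw [Fin.sum_univ_three, hpair 0 1 2 (by decide), hpair 1 0 2 (by decide),
    hpair 2 0 1 (by decide)] at hcount
  set c₀₁ := Nat.card (G.induce {v : V | φ v = 0 ∨ φ v = 1}).ConnectedComponent
  set c₁₂ := Nat.card (G.induce {v : V | φ v = 1 ∨ φ v = 2}).ConnectedComponent
  set c₀₂ := Nat.card (G.induce {v : V | φ v = 0 ∨ φ v = 2}).ConnectedComponent
  have hmax : (∑ i ∈ range m, ((i : ℝ) - 4) * s i + 8) / 6 ≤ max (max (c₀₁ : ℝ) c₁₂) c₀₂ := by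
    have hcount' : (2 * Fintype.card V : ℝ) ≤ c₁₂ + c₀₂ + c₀₁ + Nat.card G.edgeSet := by
      exact_mod_cast hcount
    rw [sum_sub_four_mul_eq_of_euler heuler hdouble]
    linarith [le_max_left (max (c₀₁ : ℝ) c₁₂) c₀₂, le_max_right (max (c₀₁ : ℝ) c₁₂) c₀₂,
      le_max_left (c₀₁ : ℝ) c₁₂, le_max_right (c₀₁ : ℝ) c₁₂]
  refine ⟨hmax, (Real.rpow_le_rpow_of_exponent_le one_le_two hmax).trans ?_⟩
  have hkempe (a b : Fin 3) (hab : a ≠ b) :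
      (2 : ℝ) ^ (Nat.card (G.kempeGraph φ a b).ConnectedComponent : ℝ) ≤
        Nat.card {f : V → Fin 3 // ∀ u v : V, G.Adj u v → f u ≠ f v} := by
    rw [Real.rpow_natCast]
    exact_mod_cast two_pow_card_connectedComponent_kempeGraph_le_card hφ hab
  rcases max_choice (max (c₀₁ : ℝ) c₁₂) c₀₂ with h | h <;> rw [h]
  · rcases max_choice (c₀₁ : ℝ) c₁₂ with h | h <;> rw [h]
    · exact hkempe 0 1 (by decide)
    · exact hkempe 1 2 (by decide)
  · exact hkempe 0 2 (by decide)

/-- For a connected plane triangle-free 3-colorable graph (plane structure given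
by the face counts `s` together with Euler's formula and edge–face double
counting): `max(c₁₂, c₂₃, c₁₃) ≥ (s⁺ + 8)/6`, and `G` has at least
`2^{(s⁺+8)/6}` proper 3-colorings, where `s⁺ = Σ_{i≥5} (i-4)sᵢ`. -/
theorem many_colorings_of_plane_triangle_free {V : Type*} [Fintype V]
    (G : SimpleGraph V) (hconn : G.Connected) (htf : G.CliqueFree 3)
    (hn : 3 ≤ Fintype.card V)
    (m : ℕ) (s : ℕ → ℕ) (h4 : ∀ i < 4, s i = 0)
    (heuler : Nat.card G.edgeSet + 2 = Fintype.card V + ∑ i ∈ Finset.range m, s i)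
    (hdouble : 2 * Nat.card G.edgeSet = ∑ i ∈ Finset.range m, i * s i)
    (φ : V → Fin 3) (hφ : ∀ u v : V, G.Adj u v → φ u ≠ φ v) :
    (((∑ i ∈ Finset.range m, ((i : ℝ) - 4) * (s i : ℝ)) + 8) / 6 ≤
        (max (max
          (Nat.card ((G.induce {v : V | φ v = 0 ∨ φ v = 1}).ConnectedComponent))
          (Nat.card ((G.induce {v : V | φ v = 1 ∨ φ v = 2}).ConnectedComponent)))
          (Nat.card ((G.induce {v : V | φ v = 0 ∨ φ v = 2}).ConnectedComponent)) : ℝ)) ∧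
    (2 : ℝ) ^ (((∑ i ∈ Finset.range m, ((i : ℝ) - 4) * (s i : ℝ)) + 8) / 6) ≤
      (Nat.card {f : V → Fin 3 // ∀ u v : V, G.Adj u v → f u ≠ f v} : ℝ) :=
  many_colorings_of_plane_triangle_free_general G m s heuler hdouble φ hφ
end
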